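/- arXiv:1406.1210 — 3 statements merged into one kernel-verified Lean document; each statement's English description precedes it below -/
import Mathlib

section
/- Let 1 < p < 2. There exist constants c, C > 0 such that for all real t and all 0 < η ≤ 1: if t ∈ [-η, η] then |1+t|^p ≥ 1 + p·t + (1/2)·p·(p-1)·t² - C·η·t², and if |t| > η then |1+t|^p ≥ 1 + p·t + c·η^(2-p)·|t|^p. -/
/-!
Since the third derivative of `(1 + t)^p` is negative, its second-order Taylor polynomial at `0`
is a lower bound for `-1 ≤ t ≤ 0`, and for `t ≥ 0` it fails by at most a multiple of
`|t|^3 ≤ η t²`. For the second inequality we show `|1 + t|^p - 1 - p t ≥ c min(t², |t|^p)` for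
all `t`: for `|t| ≤ 1` from the Taylor bound, for `t ≥ 1` because the difference
`(1 + t)^p - 1 - p t - c t^p` is increasing, and for `t ≤ -1` by comparing `|1 + t|` with
`|t| / 2`. Finally `η^(2-p) |t|^p ≤ min(t², |t|^p)` as soon as `η < |t|` and `η ≤ 1`.
The monotonicity arguments reduce, after differentiating, to Bernoulli-type bounds for
`(1 + x)^(p-1)`.
-/

open Real Set

section

variable {p : ℝ}

theorem one_add_mul_self_sub_le_rpow_one_add {s : ℝ} (hs : 0 ≤ s) (hp0 : 0 ≤ p) (hp1 : p ≤ 1) :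
    1 + p * s - p * (1 - p) * s ^ 2 ≤ (1 + s) ^ p := by
  have hbern : (1 + s) ^ (1 - p) ≤ 1 + (1 - p) * s :=
    rpow_one_add_le_one_add_mul_self (by linarith) (by linarith) (by linarith)
  have hsplit : (1 + s) ^ p * (1 + s) ^ (1 - p) = 1 + s := by
    rw [← rpow_add (by linarith), add_sub_cancel, rpow_one]
  have hpos : 0 < 1 + (1 - p) * s := by nlinarith
  -- `(1 + p s - p (1 - p) s²)(1 + (1 - p) s) = 1 + s - p (1 - p)² s³`
  have hprod : (1 + p * s - p * (1 - p) * s ^ 2) * (1 + (1 - p) * s) ≤ 1 + s := by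
    nlinarith [mul_nonneg (mul_nonneg hp0 (sq_nonneg (1 - p))) (pow_nonneg hs 3)]
  refine le_of_mul_le_mul_right (hprod.trans ?_) hpos
  calc 1 + s = (1 + s) ^ p * (1 + s) ^ (1 - p) := hsplit.symm
    _ ≤ (1 + s) ^ p * (1 + (1 - p) * s) :=
      mul_le_mul_of_nonneg_left hbern (rpow_nonneg (by linarith) _)

theorem one_add_mul_rpow_le_rpow_one_add {x : ℝ} (hx : 1 ≤ x) (hp : 0 ≤ p) :
    1 + (1 - 2 ^ (-p)) * x ^ p ≤ (1 + x) ^ p := by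
  have h2 : (2 : ℝ) ^ p ≤ (1 + x) ^ p := rpow_le_rpow (by norm_num) (by linarith) hp
  have hx' : x ^ p ≤ (1 + x) ^ p := rpow_le_rpow (by linarith) (by linarith) hp
  have hθ : (2 : ℝ) ^ (-p) * 2 ^ p = 1 := by rw [← rpow_add two_pos, neg_add_cancel, rpow_zero]
  have hθ1 : (2 : ℝ) ^ (-p) ≤ 1 := rpow_le_one_of_one_le_of_nonpos one_le_two (by linarith)
  have hθ0 : (0 : ℝ) ≤ 2 ^ (-p) := rpow_nonneg zero_le_two _
  -- `(1 + x)^p` is the convex combination of itself with weights `2^(-p)` and `1 - 2^(-p)`.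
  nlinarith [mul_le_mul_of_nonneg_left h2 hθ0, mul_le_mul_of_nonneg_left hx' (sub_nonneg.2 hθ1)]

theorem hasDerivAt_one_add_rpow (hp : 1 ≤ p) (x : ℝ) :
    HasDerivAt (fun t => (1 + t) ^ p) (p * (1 + x) ^ (p - 1)) x := by
  simpa using ((hasDerivAt_id x).const_add 1).rpow_const (p := p) (Or.inr hp)

theorem hasDerivAt_one_add_rpow_sub_taylor (hp : 1 ≤ p) (x : ℝ) :
    HasDerivAt (fun t => (1 + t) ^ p - (1 + p * t + (1/2) * p * (p - 1) * t ^ 2))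
      (p * ((1 + x) ^ (p - 1) - (1 + (p - 1) * x))) x := by
  have hpoly := (((hasDerivAt_id' x).const_mul p).const_add 1).add
    ((hasDerivAt_pow 2 x).const_mul ((1/2) * p * (p - 1)))
  exact ((hasDerivAt_one_add_rpow hp x).sub hpoly).congr_deriv (by push_cast; ring)

theorem taylor_le_one_add_rpow_of_nonpos (hp1 : 1 ≤ p) (hp2 : p ≤ 2) {t : ℝ}
    (ht1 : -1 ≤ t) (ht0 : t ≤ 0) :
    1 + p * t + (1/2) * p * (p - 1) * t ^ 2 ≤ (1 + t) ^ p := by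
  have hF := hasDerivAt_one_add_rpow_sub_taylor hp1
  have hanti := antitoneOn_of_hasDerivWithinAt_nonpos (convex_Icc (-1) 0)
    (fun x _ => (hF x).continuousAt.continuousWithinAt) (fun x _ => (hF x).hasDerivWithinAt)
    (fun x hx => by
      rw [interior_Icc] at hx
      have := rpow_one_add_le_one_add_mul_self hx.1.le (by linarith) (by linarith : p - 1 ≤ 1)
      nlinarith)
  have := hanti ⟨ht1, ht0⟩ ⟨by norm_num, le_rfl⟩ ht0
  norm_num at this
  linarith

theorem taylor_sub_le_one_add_rpow_of_nonneg (hp1 : 1 ≤ p) (hp2 : p ≤ 2) {t : ℝ} (ht : 0 ≤ t) :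
    1 + p * t + (1/2) * p * (p - 1) * t ^ 2 - p * (p - 1) * (2 - p) / 3 * t ^ 3
      ≤ (1 + t) ^ p := by
  have hF (x : ℝ) := (hasDerivAt_one_add_rpow_sub_taylor hp1 x).add
    ((hasDerivAt_pow 3 x).const_mul (p * (p - 1) * (2 - p) / 3))
  have hmono := monotoneOn_of_hasDerivWithinAt_nonneg (convex_Ici 0)
    (fun x _ => (hF x).continuousAt.continuousWithinAt) (fun x _ => (hF x).hasDerivWithinAt)
    (fun x hx => by
      rw [interior_Ici] at hx
      have := one_add_mul_self_sub_le_rpow_one_add (le_of_lt hx) (by linarith : 0 ≤ p - 1)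
        (by linarith)
      push_cast
      nlinarith)
  have := hmono self_mem_Ici ht ht
  norm_num at this
  linarith

theorem taylor_sub_abs_pow_three_le_one_add_rpow (hp1 : 1 ≤ p) (hp2 : p ≤ 2) {t : ℝ}
    (ht : -1 ≤ t) :
    1 + p * t + (1/2) * p * (p - 1) * t ^ 2 - p * (p - 1) * (2 - p) / 3 * |t| ^ 3
      ≤ (1 + t) ^ p := by
  rcases le_total t 0 with ht0 | ht0
  · have hK : 0 ≤ p * (p - 1) * (2 - p) / 3 * |t| ^ 3 := by
      have : 0 ≤ p * (p - 1) := by nlinarith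
      have : 0 ≤ p * (p - 1) * (2 - p) := by nlinarith
      positivity
    linarith [taylor_le_one_add_rpow_of_nonpos hp1 hp2 ht ht0]
  · rw [abs_of_nonneg ht0]
    exact taylor_sub_le_one_add_rpow_of_nonneg hp1 hp2 ht0

theorem taylor_sub_mul_sq_le_one_add_rpow (hp1 : 1 ≤ p) (hp2 : p ≤ 2) {η t : ℝ} (hη : η ≤ 1)
    (ht : |t| ≤ η) :
    1 + p * t + (1/2) * p * (p - 1) * t ^ 2 - η * t ^ 2 ≤ (1 + t) ^ p := by
  have htaylor := taylor_sub_abs_pow_three_le_one_add_rpow hp1 hp2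
    (by linarith [(abs_le.1 (ht.trans hη)).1] : -1 ≤ t)
  have hcube : |t| ^ 3 ≤ η * t ^ 2 := by
    rw [pow_succ', ← sq_abs t]
    exact mul_le_mul_of_nonneg_right ht (sq_nonneg _)
  have hpp : 0 ≤ p * (p - 1) := by nlinarith
  have hK0 : 0 ≤ p * (p - 1) * (2 - p) / 3 := by
    have := mul_nonneg hpp (by linarith : (0 : ℝ) ≤ 2 - p); linarith
  have hK1 : p * (p - 1) * (2 - p) / 3 ≤ 1 := by
    nlinarith [mul_le_mul_of_nonneg_left (by linarith : 2 - p ≤ 1) hpp]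
  nlinarith [mul_le_mul_of_nonneg_left hcube hK0,
    mul_le_mul_of_nonneg_right hK1 ((abs_nonneg t).trans ht), sq_nonneg t]

theorem one_add_mul_add_sq_le_one_add_rpow (hp1 : 1 ≤ p) (hp2 : p ≤ 2) {t : ℝ} (ht : |t| ≤ 1) :
    1 + p * t + p * (p - 1) / 6 * t ^ 2 ≤ (1 + t) ^ p := by
  have hcube : |t| ^ 3 ≤ t ^ 2 := by
    rw [pow_succ, ← sq_abs t]
    exact mul_le_of_le_one_right (sq_nonneg _) ht
  have hpp : 0 ≤ p * (p - 1) := by nlinarith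
  have := taylor_sub_abs_pow_three_le_one_add_rpow hp1 hp2 (abs_le.1 ht).1
  nlinarith [mul_le_mul_of_nonneg_left hcube hpp, mul_nonneg hpp (pow_nonneg (abs_nonneg t) 3)]

theorem one_add_mul_add_mul_rpow_le_one_add_rpow (hp : 1 ≤ p) {c : ℝ}
    (hc₁ : c ≤ 1 - 2 ^ (1 - p)) (hc₂ : c ≤ 2 ^ p - 1 - p) {t : ℝ} (ht : 1 ≤ t) :
    1 + p * t + c * t ^ p ≤ (1 + t) ^ p := by
  have hF (x : ℝ) := (hasDerivAt_one_add_rpow hp x).sub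
    ((((hasDerivAt_id' x).const_mul p).const_add 1).add
      ((hasDerivAt_rpow_const (Or.inr hp)).const_mul c))
  have hmono := monotoneOn_of_hasDerivWithinAt_nonneg (convex_Ici 1)
    (fun x _ => (hF x).continuousAt.continuousWithinAt) (fun x _ => (hF x).hasDerivWithinAt)
    (fun x hx => by
      rw [interior_Ici] at hx
      have := one_add_mul_rpow_le_rpow_one_add (le_of_lt hx) (by linarith : 0 ≤ p - 1)
      rw [neg_sub] at this
      have hx0 : 0 ≤ x ^ (p - 1) := rpow_nonneg (by linarith [mem_Ioi.1 hx]) _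
      nlinarith [mul_le_mul_of_nonneg_right hc₁ hx0])
  have := hmono self_mem_Ici ht ht
  norm_num at this
  linarith

theorem one_add_mul_add_mul_rpow_le_abs_one_add_rpow (hp1 : 1 ≤ p) (hp2 : p ≤ 2) {t : ℝ}
    (ht : t ≤ -1) :
    1 + p * t + (p - 1) / 4 * |t| ^ p ≤ |1 + t| ^ p := by
  obtain ⟨u, hu, rfl⟩ : ∃ u, 1 ≤ u ∧ t = -u := ⟨-t, by linarith, by ring⟩
  rw [abs_neg, abs_of_nonneg (by linarith : 0 ≤ u), show 1 + -u = -(u - 1) by ring, abs_neg,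
    abs_of_nonneg (by linarith : 0 ≤ u - 1)]
  have h2p : (2 : ℝ) ^ p ≤ 4 := by
    have := rpow_le_rpow_of_exponent_le one_le_two hp2
    norm_num [rpow_two] at this
    exact this
  have hup : 0 ≤ u ^ p := rpow_nonneg (by linarith) _
  rcases le_total u 2 with hu2 | hu2
  · have : u ^ p ≤ 4 := (rpow_le_rpow (by linarith) hu2 (by linarith)).trans h2p
    nlinarith [rpow_nonneg (by linarith : 0 ≤ u - 1) p]
  · -- for `u ≥ 2`, `u - 1 ≥ u / 2`, so `(u - 1)^p ≥ u^p / 2^p ≥ u^p / 4`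
    have hhalf : u ^ p / 2 ^ p ≤ (u - 1) ^ p := by
      rw [← div_rpow (by linarith) zero_le_two]
      exact rpow_le_rpow (by linarith) (by linarith) (by linarith)
    have : u ^ p / 4 ≤ u ^ p / 2 ^ p := div_le_div_of_nonneg_left hup (by positivity) h2p
    nlinarith

theorem exists_pos_one_add_mul_add_min_le_abs_one_add_rpow (hp1 : 1 < p) (hp2 : p ≤ 2) :
    ∃ c > 0, ∀ t : ℝ, 1 + p * t + c * min (t ^ 2) (|t| ^ p) ≤ |1 + t| ^ p := by
  set c := min (min (p * (p - 1) / 6) (1 - 2 ^ (1 - p))) (min (2 ^ p - 1 - p) ((p - 1) / 4))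
  have hc_sq : c ≤ p * (p - 1) / 6 := (min_le_left _ _).trans (min_le_left _ _)
  have hc_right₁ : c ≤ 1 - 2 ^ (1 - p) := (min_le_left _ _).trans (min_le_right _ _)
  have hc_right₂ : c ≤ 2 ^ p - 1 - p := (min_le_right _ _).trans (min_le_left _ _)
  have hc_left : c ≤ (p - 1) / 4 := (min_le_right _ _).trans (min_le_right _ _)
  have h2 : (2 : ℝ) ^ (1 - p) < 1 := rpow_lt_one_of_one_lt_of_neg one_lt_two (by linarith)
  have h2p : 1 + p < (2 : ℝ) ^ p := by
    simpa [one_add_one_eq_two] using one_add_mul_self_lt_rpow_one_add (s := 1) (by norm_num)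
      one_ne_zero hp1
  have hc : 0 < c :=
    lt_min (lt_min (by nlinarith) (by linarith)) (lt_min (by linarith) (by linarith))
  refine ⟨c, hc, fun t => ?_⟩
  have hmin_sq := mul_le_mul_of_nonneg_left (min_le_left (t ^ 2) (|t| ^ p)) hc.le
  have hmin_rpow := mul_le_mul_of_nonneg_left (min_le_right (t ^ 2) (|t| ^ p)) hc.le
  rcases le_or_gt |t| 1 with ht | ht
  · rw [abs_of_nonneg (by linarith [(abs_le.1 ht).1] : 0 ≤ 1 + t)]
    have := one_add_mul_add_sq_le_one_add_rpow hp1.le hp2 ht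
    nlinarith [mul_le_mul_of_nonneg_right hc_sq (sq_nonneg t)]
  rcases lt_or_gt_of_ne (abs_pos.1 (zero_lt_one.trans ht)) with ht0 | ht0
  · have := one_add_mul_add_mul_rpow_le_abs_one_add_rpow hp1.le hp2
      (by linarith [abs_of_neg ht0] : t ≤ -1)
    nlinarith [mul_le_mul_of_nonneg_right hc_left (rpow_nonneg (abs_nonneg t) p)]
  · rw [abs_of_pos ht0] at ht hmin_rpow ⊢
    rw [abs_of_pos (by linarith : 0 < 1 + t)]
    have := one_add_mul_add_mul_rpow_le_one_add_rpow hp1.le hc_right₁ hc_right₂ ht.le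
    linarith

theorem rpow_two_sub_mul_rpow_le_min (hp : p ≤ 2) {η t : ℝ} (hη0 : 0 ≤ η) (hη1 : η ≤ 1)
    (hηt : η ≤ |t|) :
    η ^ (2 - p) * |t| ^ p ≤ min (t ^ 2) (|t| ^ p) := by
  have htp : 0 ≤ |t| ^ p := rpow_nonneg (abs_nonneg t) p
  refine le_min ?_ ?_
  · calc η ^ (2 - p) * |t| ^ p ≤ |t| ^ (2 - p) * |t| ^ p :=
          mul_le_mul_of_nonneg_right (rpow_le_rpow hη0 hηt (by linarith)) htp
      _ = t ^ 2 := by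
          rw [← rpow_add' (abs_nonneg t) (by norm_num), sub_add_cancel, rpow_two, sq_abs]
  · exact mul_le_of_le_one_left htp (rpow_le_one hη0 hη1 (by linarith))

end

/-- quasi-Taylor lower bound for `|1+t|^p`, `1 < p < 2`. -/
theorem stmt0 (p : ℝ) (hp1 : 1 < p) (hp2 : p < 2) :
    ∃ c C : ℝ, 0 < c ∧ 0 < C ∧ ∀ t η : ℝ, 0 < η → η ≤ 1 →
      (t ∈ Set.Icc (-η) η →
        1 + p * t + (1/2) * p * (p - 1) * t ^ 2 - C * η * t ^ 2 ≤ |1 + t| ^ p) ∧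
      (η < |t| →
        1 + p * t + c * η ^ (2 - p) * |t| ^ p ≤ |1 + t| ^ p) := by
  obtain ⟨c, hc, hmin⟩ := exists_pos_one_add_mul_add_min_le_abs_one_add_rpow hp1 hp2.le
  refine ⟨c, 1, hc, one_pos, fun t η hη0 hη1 => ⟨fun ht => ?_, fun hηt => ?_⟩⟩
  · rw [abs_of_nonneg (by linarith [ht.1] : 0 ≤ 1 + t), one_mul]
    exact taylor_sub_mul_sq_le_one_add_rpow hp1.le hp2.le hη1 (abs_le.2 ht)
  · calc 1 + p * t + c * η ^ (2 - p) * |t| ^ p ≤ 1 + p * t + c * min (t ^ 2) (|t| ^ p) := by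
          rw [mul_assoc]
          gcongr
          exact rpow_two_sub_mul_rpow_le_min hp2.le hη0.le hη1 hηt.le
      _ ≤ |1 + t| ^ p := hmin t
end

section
/- For each finite abelian group G and nonempty subset A ⊆ G: if #(A−A) < (3/2)·#A, then the symmetry group H = Symm(A−A) = {g : (A−A)+g = A−A} satisfies #H ≥ (1/2)·#(A−A), H is a subgroup of G containing A−A's stabilizer, and H ⊆ A−A. -/
open Pointwise

/-! Each overlap `A ∩ (d +ᵥ A)` with `d ∈ A - A` has at least `2#A - #(A - A)` elements, since
`A ∪ (d +ᵥ A)` fits in a translate of `A - A`. When `#(A - A) < (3/2)#A` any two of these subsets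
of `A` meet, and a common point `d₁ + b₁ = d₂ + b₂` writes `d₁ - d₂ = b₂ - b₁ ∈ A - A`.
So `A - A` is a subgroup, and a subgroup is its own stabilizer. -/

namespace Set

theorem inter_nonempty_of_ncard_lt_ncard_add_ncard {α : Type*} {A s t : Set α} (hA : A.Finite)
    (hs : s ⊆ A) (ht : t ⊆ A) (hst : A.ncard < s.ncard + t.ncard) : (s ∩ t).Nonempty := by
  have hsum := ncard_inter_add_ncard_union s t (hA.subset hs) (hA.subset ht)
  have hunion := ncard_le_ncard (union_subset hs ht) hA
  exact (ncard_pos (hA.subset (inter_subset_left.trans hs))).mp (by omega)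

variable {G : Type*} [AddCommGroup G] {A : Set G}

theorem union_vadd_subset_vadd_sub {a₁ a₂ : G} (ha₁ : a₁ ∈ A) (ha₂ : a₂ ∈ A) :
    A ∪ ((a₁ - a₂) +ᵥ A) ⊆ a₁ +ᵥ (A - A) := by
  rintro x (hx | ⟨y, hy, rfl⟩)
  · exact ⟨x - a₁, sub_mem_sub hx ha₁, by simp only [vadd_eq_add]; abel⟩
  · exact ⟨y - a₂, sub_mem_sub hy ha₂, by simp only [vadd_eq_add]; abel⟩

theorem two_mul_ncard_le_ncard_inter_vadd_add_ncard_sub (hA : A.Finite) {d : G}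
    (hd : d ∈ A - A) : 2 * A.ncard ≤ (A ∩ (d +ᵥ A)).ncard + (A - A).ncard := by
  obtain ⟨a₁, ha₁, a₂, ha₂, rfl⟩ : ∃ a₁ ∈ A, ∃ a₂ ∈ A, a₁ - a₂ = d := hd
  have hunion : (A ∪ ((a₁ - a₂) +ᵥ A)).ncard ≤ (A - A).ncard :=
    calc (A ∪ ((a₁ - a₂) +ᵥ A)).ncard ≤ (a₁ +ᵥ (A - A)).ncard :=
          ncard_le_ncard (union_vadd_subset_vadd_sub ha₁ ha₂) ((hA.sub hA).vadd_set)
      _ = (A - A).ncard := ncard_vadd_set a₁ (A - A)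
  have := ncard_inter_add_ncard_union A ((a₁ - a₂) +ᵥ A) hA hA.vadd_set
  rw [ncard_vadd_set] at this
  omega

theorem sub_mem_sub_of_two_mul_ncard_sub_lt (hA : A.Finite)
    (h : 2 * (A - A).ncard < 3 * A.ncard) {d₁ d₂ : G} (hd₁ : d₁ ∈ A - A) (hd₂ : d₂ ∈ A - A) :
    d₁ - d₂ ∈ A - A := by
  have h₁ := two_mul_ncard_le_ncard_inter_vadd_add_ncard_sub hA hd₁
  have h₂ := two_mul_ncard_le_ncard_inter_vadd_add_ncard_sub hA hd₂
  obtain ⟨x, ⟨-, b₁, hb₁, hx₁⟩, -, b₂, hb₂, hx₂⟩ :=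
    inter_nonempty_of_ncard_lt_ncard_add_ncard (s := A ∩ (d₁ +ᵥ A)) (t := A ∩ (d₂ +ᵥ A)) hA
      inter_subset_left inter_subset_left (by omega)
  refine ⟨b₂, hb₂, b₁, hb₁, ?_⟩
  rw [sub_eq_sub_iff_add_eq_add, add_comm b₂]
  exact (hx₁.trans hx₂.symm).symm

end Set

theorem AddSubgroup.setOf_vadd_coe_eq_self {G : Type*} [AddGroup G] (H : AddSubgroup G) :
    {g : G | g +ᵥ (H : Set G) = H} = H := by
  ext g
  refine ⟨fun hg => ?_, vadd_coe_set⟩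
  have : g + 0 ∈ g +ᵥ (H : Set G) := Set.vadd_mem_vadd_set H.zero_mem
  rwa [hg, add_zero] at this

/-- Kneser-type conclusion: if `#(A-A) < (3/2)#A` then the symmetry
group `H` of `A - A` is large, is a subgroup (equal to the stabilizer of `A-A`),
and is contained in `A - A`. -/
theorem stmt7 (G : Type) [AddCommGroup G] [Fintype G] (A : Set G) (hA : A.Nonempty)
    (h : ((A - A).ncard : ℝ) < (3 / 2) * (A.ncard : ℝ)) :
    (1 / 2 : ℝ) * ((A - A).ncard : ℝ) ≤ ({g : G | g +ᵥ (A - A) = A - A}.ncard : ℝ) ∧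
    (∃ H : AddSubgroup G, (H : Set G) = {g : G | g +ᵥ (A - A) = A - A} ∧
      {g : G | (A - A) + {g} = A - A} ⊆ (H : Set G)) ∧
    {g : G | g +ᵥ (A - A) = A - A} ⊆ A - A := by
  have hcard : 2 * (A - A).ncard < 3 * A.ncard := by
    have : (2 * (A - A).ncard : ℝ) < 3 * A.ncard := by linarith
    exact_mod_cast this
  let H := AddSubgroup.ofSub (A - A) (hA.sub hA) fun d₁ hd₁ d₂ hd₂ => by
    simpa [← sub_eq_add_neg] using Set.sub_mem_sub_of_two_mul_ncard_sub_lt A.toFinite hcard hd₁ hd₂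
  have hstab : {g : G | g +ᵥ (A - A) = A - A} = A - A := H.setOf_vadd_coe_eq_self
  have hright : {g : G | (A - A) + {g} = A - A} = {g : G | g +ᵥ (A - A) = A - A} := by
    simp only [Set.add_singleton, ← Set.image_vadd, vadd_eq_add, add_comm]
  refine ⟨?_, ⟨H, hstab.symm, hright.subset.trans hstab.subset⟩, hstab.subset⟩
  rw [hstab]
  linarith [(A - A).ncard.cast_nonneg (α := ℝ)]
end

section
/- Let 1 < p < 2, d ≥ 1, G(x) = e^{−π|x|²}, t = (2−p)/2, σ = (p−1)/(2−p), and define the operator 𝒯 on L²(ℝ^d) by 𝒯(φ) = G^t · (G^σ ∗ (G^t·φ)). Then 𝒯(G^{p/2}) = (2−p)^{d/2} · G^{p/2}, i.e., G^{p/2} is an eigenfunction with eigenvalue (2−p)^{d/2}. -/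
open MeasureTheory Real

/-! Completing the square, `s‖x - y‖² + t‖y‖² = (st/(s+t))‖x‖² + (s+t)‖y - (s/(s+t))x‖²`,
turns the convolution of two Gaussians into a Gaussian in `x` times a translated Gaussian in `y`,
whose integral is `(s+t)^{-d/2}`. Since `G^{(2-p)/2} G^{p/2} = G^1`, taking `s = (p-1)/(2-p)`,
`t = 1` gives `G^s ∗ G^1 = (2-p)^{d/2} G^{p-1}`, and `G^{(2-p)/2} G^{p-1} = G^{p/2}`. -/

section GaussianConvolution

variable {V : Type*} [NormedAddCommGroup V]

theorem exp_neg_pi_mul_sq_norm_mul_exp (a b : ℝ) (x : V) :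
    exp (-(π * a * ‖x‖ ^ 2)) * exp (-(π * b * ‖x‖ ^ 2)) = exp (-(π * (a + b) * ‖x‖ ^ 2)) := by
  rw [← exp_add]
  ring_nf

variable [InnerProductSpace ℝ V]

theorem exp_neg_pi_mul_sq_norm_sub_mul_exp {s t : ℝ} (hst : s + t ≠ 0) (x y : V) :
    exp (-(π * s * ‖x - y‖ ^ 2)) * exp (-(π * t * ‖y‖ ^ 2)) =
      exp (-(π * (s * t / (s + t)) * ‖x‖ ^ 2)) *
        exp (-(π * (s + t)) * ‖y - (s / (s + t)) • x‖ ^ 2) := by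
  rw [← exp_add, ← exp_add]
  congr 1
  rw [norm_sub_sq_real, norm_sub_sq_real, real_inner_smul_right, norm_smul, mul_pow,
    Real.norm_eq_abs, sq_abs, real_inner_comm]
  field_simp
  ring

variable [FiniteDimensional ℝ V] [MeasurableSpace V] [BorelSpace V]

theorem integral_exp_neg_pi_mul_sq_norm_sub_mul_exp {s t : ℝ} (hst : 0 < s + t) (x : V) :
    ∫ y, exp (-(π * s * ‖x - y‖ ^ 2)) * exp (-(π * t * ‖y‖ ^ 2)) =
      (s + t)⁻¹ ^ (Module.finrank ℝ V / 2 : ℝ) * exp (-(π * (s * t / (s + t)) * ‖x‖ ^ 2)) := by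
  simp_rw [exp_neg_pi_mul_sq_norm_sub_mul_exp hst.ne', integral_const_mul,
    integral_sub_right_eq_self (fun y => exp (-(π * (s + t)) * ‖y‖ ^ 2)),
    GaussianFourier.integral_rexp_neg_mul_sq_norm (mul_pos pi_pos hst),
    div_mul_cancel_left₀ pi_ne_zero]
  ring

end GaussianConvolution

theorem stmt18_general (d : ℕ) (p : ℝ) (hp2 : p < 2) :
    ∀ x : EuclideanSpace ℝ (Fin d),
      Real.exp (-(Real.pi * ((2 - p) / 2) * ‖x‖ ^ 2)) *
          ∫ y : EuclideanSpace ℝ (Fin d),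
            Real.exp (-(Real.pi * ((p - 1) / (2 - p)) * ‖x - y‖ ^ 2)) *
              (Real.exp (-(Real.pi * ((2 - p) / 2) * ‖y‖ ^ 2)) *
                Real.exp (-(Real.pi * (p / 2) * ‖y‖ ^ 2))) =
        (2 - p) ^ ((d : ℝ) / 2) * Real.exp (-(Real.pi * (p / 2) * ‖x‖ ^ 2)) := by
  intro x
  have h2p : 2 - p ≠ 0 := (sub_pos.2 hp2).ne'
  have hsum : (p - 1) / (2 - p) + 1 = (2 - p)⁻¹ := by field_simp; ring
  have hrate : (p - 1) / (2 - p) * 1 / (2 - p)⁻¹ = p - 1 := by field_simp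
  simp_rw [exp_neg_pi_mul_sq_norm_mul_exp ((2 - p) / 2) (p / 2)]
  rw [show (2 - p) / 2 + p / 2 = 1 by ring,
    integral_exp_neg_pi_mul_sq_norm_sub_mul_exp (hsum ▸ inv_pos.2 (sub_pos.2 hp2)),
    hsum, hrate, inv_inv, finrank_euclideanSpace_fin, mul_left_comm,
    exp_neg_pi_mul_sq_norm_mul_exp, show (2 - p) / 2 + (p - 1) = p / 2 by ring]

/-- `G^{p/2}` is an eigenfunction of `𝒯(φ) = G^t · (G^σ ∗ (G^t φ))`
with eigenvalue `(2−p)^{d/2}`, where `t = (2−p)/2` and `σ = (p−1)/(2−p)`. -/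
theorem stmt18 (d : ℕ) (hd : 1 ≤ d) (p : ℝ) (hp1 : 1 < p) (hp2 : p < 2) :
    ∀ x : EuclideanSpace ℝ (Fin d),
      Real.exp (-(Real.pi * ((2 - p) / 2) * ‖x‖ ^ 2)) *
          ∫ y : EuclideanSpace ℝ (Fin d),
            Real.exp (-(Real.pi * ((p - 1) / (2 - p)) * ‖x - y‖ ^ 2)) *
              (Real.exp (-(Real.pi * ((2 - p) / 2) * ‖y‖ ^ 2)) *
                Real.exp (-(Real.pi * (p / 2) * ‖y‖ ^ 2))) =
        (2 - p) ^ ((d : ℝ) / 2) * Real.exp (-(Real.pi * (p / 2) * ‖x‖ ^ 2)) :=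
  stmt18_general d p hp2
end
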